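/- Let d ≥ 1, θ ∈ ℝ^d with θ ≠ 0, σ_s > 0 and x ∈ ℝ^d. Then N(0, σ_s²I_d)({δ : ⟨θ, x + δ⟩ > 0}) ≥ 1/2 if and only if ⟨θ, x⟩ ≥ 0. In particular, the randomized-smoothing majority-vote classifier obtained from the linear classifier sign(⟨θ,·⟩) by Gaussian smoothing agrees with the linear classifier at every point x with ⟨θ, x⟩ ≠ 0. -/

import Mathlib

open MeasureTheory ProbabilityTheory
open scoped RealInnerProductSpace NNReal ENNReal

/-- The multivariate Gaussian measure `N(m, v·I_d)` on `ℝ^d = EuclideanSpace ℝ (Fin d)`. -/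
noncomputable def gaussN (d : ℕ) (m : EuclideanSpace ℝ (Fin d)) (v : ℝ≥0) :
    Measure (EuclideanSpace ℝ (Fin d)) :=
  (Measure.pi fun i => gaussianReal (m i) v).map
    (MeasurableEquiv.toLp 2 (Fin d → ℝ))

/-!
The image of the isotropic Gaussian `N(m, v I_d)` under `δ ↦ ⟪θ, δ⟫` is the real Gaussian
`N(⟪θ, m⟫, v ‖θ‖²)`, as one sees by comparing characteristic functions. A non-degenerate real
Gaussian gives mass exactly `1/2` to the half-line above its mean (by the reflection symmetry about
the mean and the absence of atoms) and strictly less to every smaller half-line (it charges every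
open interval).
-/

instance isProbabilityMeasure_gaussN (d : ℕ) (m : EuclideanSpace ℝ (Fin d)) (v : ℝ≥0) :
    IsProbabilityMeasure (gaussN d m v) :=
  Measure.isProbabilityMeasure_map (by fun_prop)

open Complex in
lemma charFun_gaussN (d : ℕ) (m : EuclideanSpace ℝ (Fin d)) (v : ℝ≥0)
    (t : EuclideanSpace ℝ (Fin d)) :
    charFun (gaussN d m v) t = exp (⟪t, m⟫ * I - v * ‖t‖ ^ 2 / 2) := by
  simp_rw [gaussN, MeasurableEquiv.coe_toLp, charFun_pi, charFun_gaussianReal, ← exp_sum]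
  rw [← ofReal_pow, EuclideanSpace.real_norm_sq_eq, PiLp.inner_apply]
  push_cast
  congr 1
  rw [Finset.sum_sub_distrib, Finset.sum_mul, Finset.mul_sum, Finset.sum_div]
  simp [mul_comm]

lemma charFun_map_inner {E : Type*} [NormedAddCommGroup E] [InnerProductSpace ℝ E]
    [MeasurableSpace E] [BorelSpace E] (μ : Measure E) (θ : E) (s : ℝ) :
    charFun (μ.map (⟪θ, ·⟫)) s = charFun μ (s • θ) := by
  rw [charFun_apply_real, charFun_apply, integral_map (by fun_prop) (by fun_prop)]
  simp [real_inner_smul_right, real_inner_comm, mul_comm]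

lemma gaussN_map_inner (d : ℕ) (m θ : EuclideanSpace ℝ (Fin d)) (v : ℝ≥0) :
    (gaussN d m v).map (⟪θ, ·⟫) = gaussianReal ⟪θ, m⟫ (v * ‖θ‖₊ ^ 2) := by
  refine Measure.ext_of_charFun (funext fun s => ?_)
  rw [charFun_map_inner, charFun_gaussN, charFun_gaussianReal, real_inner_smul_left,
    real_inner_comm, ← Complex.ofReal_pow, norm_smul, mul_pow, Real.norm_eq_abs, sq_abs]
  push_cast
  ring_nf

lemma gaussianReal_Iio_self_eq_Ioi_self {μ : ℝ} {v : ℝ≥0} :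
    gaussianReal μ v (Set.Iio μ) = gaussianReal μ v (Set.Ioi μ) := by
  have hreflect : (gaussianReal μ v).map (2 * μ - ·) = gaussianReal μ v := by
    rw [gaussianReal_map_const_sub]
    ring_nf
  conv_lhs => rw [← hreflect, Measure.map_apply (by fun_prop) measurableSet_Iio]
  congr 1
  ext x
  simp only [Set.mem_preimage, Set.mem_Iio, Set.mem_Ioi]
  constructor <;> intro <;> linarith

lemma gaussianReal_Ioi_self {μ : ℝ} {v : ℝ≥0} (hv : v ≠ 0) :
    gaussianReal μ v (Set.Ioi μ) = 1 / 2 := by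
  have := nullSingletonClass_gaussianReal (μ := μ) hv
  have hsum : gaussianReal μ v (Set.Iio μ) + gaussianReal μ v (Set.Ioi μ) = 1 := by
    rw [← measure_union Set.Ioi_disjoint_Iio_same.symm measurableSet_Ioi, Set.Iio_union_Ioi,
      prob_compl_eq_one_sub (measurableSet_singleton μ), measure_singleton, tsub_zero]
  rw [gaussianReal_Iio_self_eq_Ioi_self, ← two_mul] at hsum
  rw [ENNReal.eq_div_iff two_ne_zero ENNReal.ofNat_ne_top, hsum]

lemma measure_Ioi_lt_measure_Ioi {μ : Measure ℝ} [IsFiniteMeasure μ] [μ.IsOpenPosMeasure]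
    {s t : ℝ} (hst : s < t) : μ (Set.Ioi t) < μ (Set.Ioi s) := by
  have hpos : 0 < μ (Set.Ioc s t) :=
    (isOpen_Ioo.measure_pos μ (Set.nonempty_Ioo.mpr hst)).trans_le
      (measure_mono Set.Ioo_subset_Ioc_self)
  rw [← Set.Ioc_union_Ioi_eq_Ioi hst.le, measure_union Set.Ioc_disjoint_Ioi_same
    measurableSet_Ioi, add_comm]
  exact ENNReal.lt_add_right (measure_ne_top μ _) hpos.ne'

lemma one_half_le_gaussianReal_Ioi_iff {μ t : ℝ} {v : ℝ≥0} (hv : v ≠ 0) :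
    1 / 2 ≤ gaussianReal μ v (Set.Ioi t) ↔ t ≤ μ := by
  have := (gaussianReal_absolutelyContinuous' μ hv).isOpenPosMeasure
  rw [← gaussianReal_Ioi_self hv]
  refine ⟨fun h => ?_, fun h => measure_mono (Set.Ioi_subset_Ioi h)⟩
  by_contra! hμt
  exact (measure_Ioi_lt_measure_Ioi hμt).not_ge h

theorem stmt14_general (d : ℕ) (θ : EuclideanSpace ℝ (Fin d)) (hθ : θ ≠ 0)
    (σs : ℝ) (hσs : 0 < σs) (x : EuclideanSpace ℝ (Fin d)) :
    ((1 : ℝ≥0∞) / 2 ≤ gaussN d 0 ⟨σs ^ 2, sq_nonneg σs⟩ {δ | 0 < ⟪θ, x + δ⟫}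
      ↔ 0 ≤ ⟪θ, x⟫) ∧
    (⟪θ, x⟫ ≠ 0 →
      ((1 : ℝ≥0∞) / 2 ≤ gaussN d 0 ⟨σs ^ 2, sq_nonneg σs⟩ {δ | 0 < ⟪θ, x + δ⟫}
        ↔ 0 < ⟪θ, x⟫)) := by
  set v : ℝ≥0 := ⟨σs ^ 2, sq_nonneg σs⟩
  have hv : v ≠ 0 := NNReal.coe_ne_zero.mp (pow_pos hσs 2).ne'
  have hvar : v * ‖θ‖₊ ^ 2 ≠ 0 := mul_ne_zero hv (by simpa using hθ)
  have hset : {δ | 0 < ⟪θ, x + δ⟫} = (⟪θ, ·⟫) ⁻¹' Set.Ioi (-⟪θ, x⟫) := by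
    ext δ
    simp [inner_add_right, neg_lt_iff_pos_add']
  have key : 1 / 2 ≤ gaussN d 0 v {δ | 0 < ⟪θ, x + δ⟫} ↔ 0 ≤ ⟪θ, x⟫ := by
    rw [hset, ← Measure.map_apply (by fun_prop) measurableSet_Ioi, gaussN_map_inner,
      inner_zero_right, one_half_le_gaussianReal_Ioi_iff hvar, neg_nonpos]
  exact ⟨key, fun hx => key.trans hx.symm.le_iff_lt⟩

/-- `N(0, σ_s²I_d)({δ : ⟨θ, x+δ⟩ > 0}) ≥ 1/2` iff `⟨θ, x⟩ ≥ 0`; in particular,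
at every `x` with `⟨θ,x⟩ ≠ 0` the Gaussian-smoothed majority-vote classifier of
`sign(⟨θ,·⟩)` agrees with the linear classifier itself. -/
theorem stmt14 (d : ℕ) (hd : 1 ≤ d) (θ : EuclideanSpace ℝ (Fin d)) (hθ : θ ≠ 0)
    (σs : ℝ) (hσs : 0 < σs) (x : EuclideanSpace ℝ (Fin d)) :
    ((1 : ℝ≥0∞) / 2 ≤ gaussN d 0 ⟨σs ^ 2, sq_nonneg σs⟩ {δ | 0 < ⟪θ, x + δ⟫}
      ↔ 0 ≤ ⟪θ, x⟫) ∧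
    (⟪θ, x⟫ ≠ 0 →
      ((1 : ℝ≥0∞) / 2 ≤ gaussN d 0 ⟨σs ^ 2, sq_nonneg σs⟩ {δ | 0 < ⟪θ, x + δ⟫}
        ↔ 0 < ⟪θ, x⟫)) :=
  stmt14_general d θ hθ σs hσs x
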